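/- For the Moran walk, for every n ∈ ℕ and h ∈ ℕ one has Pr(H_n ≤ h) = Σ_{k=0}^{⌊n/(h+1)⌋} (−q p^{h+1})^k · ( C(n − k(h+1), k) − p^{h+1} · C(n − (k+1)(h+1), k) ), where C(m,k) denotes the binomial coefficient with the convention C(m,k) = 0 whenever m < 0 (and C(m,k) = 0 for 0 ≤ m < k as usual). -/

import Mathlib

/-- Altitude of the Moran walk after `j` steps: `true` means an up-step (+1),
`false` means a reset to altitude 0. -/
def moranY (ω : ℕ → Bool) : ℕ → ℕ
  | 0 => 0
  | j + 1 => if ω j then moranY ω j + 1 else 0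

/-- Height `H_n = max_{0 ≤ j ≤ n} Y_j` of the Moran walk. -/
def moranH (ω : ℕ → Bool) (n : ℕ) : ℕ :=
  (Finset.range (n + 1)).sup (moranY ω)

open Classical in
/-- Probability of the event `E` under the product measure on Moran walks of length `n`,
where an up-step has weight `p` and a reset has weight `1 - p`. -/
noncomputable def moranPr (p : ℝ) (n : ℕ) (E : (ℕ → Bool) → Prop) : ℝ :=
  ∑ ω : Fin n → Bool,
    (∏ i, if ω i then p else 1 - p) *
      (if E (fun j => if h : j < n then ω ⟨j, h⟩ else false) then 1 else 0)

/-- Binomial coefficient `C(m, k)` for an integer `m`, with the convention that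
`C(m, k) = 0` whenever `m < 0`. -/
noncomputable def chooseInt (m : ℤ) (k : ℕ) : ℝ :=
  if m < 0 then 0 else (m.toNat.choose k : ℝ)

open Classical

noncomputable def mInd (P : Prop) : ℝ := if P then 1 else 0


def mPad (n : ℕ) (ω : Fin n → Bool) : ℕ → Bool :=
  fun j => if h : j < n then ω ⟨j, h⟩ else false

lemma moranY_le (ω : ℕ → Bool) : ∀ j, moranY ω j ≤ j := by
  intro j
  induction j with
  | zero => exact le_rfl
  | succ j ih =>
    show (if ω j then moranY ω j + 1 else 0) ≤ j + 1
    split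
    · omega
    · omega

lemma moranY_congr {ω₁ ω₂ : ℕ → Bool} : ∀ m, (∀ j < m, ω₁ j = ω₂ j) → moranY ω₁ m = moranY ω₂ m := by
  intro m
  induction m with
  | zero => intro _; rfl
  | succ m ih =>
    intro hm
    show (if ω₁ m then moranY ω₁ m + 1 else 0) = (if ω₂ m then moranY ω₂ m + 1 else 0)
    rw [hm m (Nat.lt_succ_self m), ih (fun j hj => hm j (hj.trans (Nat.lt_succ_self m)))]

lemma mPad_snoc_lt {n : ℕ} (ω : Fin n → Bool) (b : Bool) {j : ℕ} (hj : j < n) :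
    mPad (n + 1) (Fin.snoc ω b) j = mPad n ω j := by
  have h1 : j < n + 1 := hj.trans (Nat.lt_succ_self n)
  simp only [mPad, dif_pos hj, dif_pos h1]
  have : (⟨j, h1⟩ : Fin (n + 1)) = Fin.castSucc ⟨j, hj⟩ := rfl
  rw [this, Fin.snoc_castSucc]

lemma mPad_snoc_self {n : ℕ} (ω : Fin n → Bool) (b : Bool) :
    mPad (n + 1) (Fin.snoc ω b) n = b := by
  simp only [mPad, dif_pos (Nat.lt_succ_self n)]
  have : (⟨n, Nat.lt_succ_self n⟩ : Fin (n + 1)) = Fin.last n := rfl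
  rw [this, Fin.snoc_last]

lemma mPad_ge {n : ℕ} (ω : Fin n → Bool) {j : ℕ} (hj : n ≤ j) : mPad n ω j = false := by
  simp [mPad, Nat.not_lt.mpr hj]

lemma moranY_pad_snoc {n : ℕ} (ω : Fin n → Bool) (b : Bool) {j : ℕ} (hj : j ≤ n) :
    moranY (mPad (n + 1) (Fin.snoc ω b)) j = moranY (mPad n ω) j :=
  moranY_congr j (fun i hi => mPad_snoc_lt ω b (lt_of_lt_of_le hi hj))

lemma moranY_pad_snoc_top {n : ℕ} (ω : Fin n → Bool) (b : Bool) :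
    moranY (mPad (n + 1) (Fin.snoc ω b)) (n + 1)
      = if b then moranY (mPad n ω) n + 1 else 0 := by
  show (if mPad (n+1) (Fin.snoc ω b) n then moranY (mPad (n+1) (Fin.snoc ω b)) n + 1 else 0) = _
  rw [mPad_snoc_self, moranY_pad_snoc ω b le_rfl]

lemma moranH_pad_snoc {n : ℕ} (ω : Fin n → Bool) (b : Bool) :
    moranH (mPad (n + 1) (Fin.snoc ω b)) (n + 1)
      = max (moranH (mPad n ω) n) (moranY (mPad (n + 1) (Fin.snoc ω b)) (n + 1)) := by
  unfold moranH
  rw [Finset.range_add_one, Finset.sup_insert]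
  rw [max_comm]
  congr 1
  apply Finset.sup_congr rfl
  intro j hj
  exact moranY_pad_snoc ω b (Nat.lt_succ_iff.mp (Finset.mem_range.mp hj))

lemma moranY_le_moranH (ω : ℕ → Bool) (n : ℕ) : moranY ω n ≤ moranH ω n :=
  Finset.le_sup (Finset.self_mem_range_succ n)

noncomputable def mW (p : ℝ) {n : ℕ} (ω : Fin n → Bool) : ℝ :=
  ∏ i, if ω i then p else 1 - p

lemma sum_snoc {n : ℕ} (F : (Fin (n + 1) → Bool) → ℝ) :
    ∑ ω : Fin (n + 1) → Bool, F ω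
      = ∑ ω : Fin n → Bool, (F (Fin.snoc ω false) + F (Fin.snoc ω true)) := by
  rw [← Equiv.sum_comp (Fin.snocEquiv (fun _ => Bool)) F]
  rw [Fintype.sum_prod_type]
  rw [Fintype.sum_bool]
  rw [← Finset.sum_add_distrib]
  congr 1
  ext ω
  rw [add_comm]
  congr 1

lemma mW_snoc (p : ℝ) {n : ℕ} (ω : Fin n → Bool) (b : Bool) :
    mW p (Fin.snoc ω b) = mW p ω * (if b then p else 1 - p) := by
  unfold mW
  rw [Fin.prod_univ_castSucc]
  simp [Fin.snoc_castSucc, Fin.snoc_last]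


lemma moranPr_eq (p : ℝ) (n : ℕ) (E : (ℕ → Bool) → Prop) :
    moranPr p n E = ∑ ω : Fin n → Bool, mW p ω * mInd (E (mPad n ω)) := rfl

noncomputable def mA (p : ℝ) (h n : ℕ) : ℝ := moranPr p n (fun ω => moranH ω n ≤ h)

noncomputable def mG (p : ℝ) (h n y : ℕ) : ℝ :=
  moranPr p n (fun ω => moranH ω n ≤ h ∧ moranY ω n = y)

lemma moranH_zero (ω : ℕ → Bool) : moranH ω 0 = 0 := by
  simp [moranH, Finset.range_one, moranY]

lemma mA_zero (p : ℝ) (h : ℕ) : mA p h 0 = 1 := by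
  rw [mA, moranPr_eq, Fintype.sum_unique]
  simp [mW, mInd, moranH_zero]

lemma mG_zero_zero (p : ℝ) (h : ℕ) : mG p h 0 0 = 1 := by
  rw [mG, moranPr_eq, Fintype.sum_unique]
  simp [mW, mInd, moranH_zero, moranY]

lemma mG_vanish (p : ℝ) (h : ℕ) {n y : ℕ} (hy : n < y) : mG p h n y = 0 := by
  rw [mG, moranPr_eq]
  apply Finset.sum_eq_zero
  intro ω _
  have : moranY (mPad n ω) n ≠ y := by
    have := moranY_le (mPad n ω) n
    omega
  simp [mInd, this]

lemma mA_succ (p : ℝ) (h n : ℕ) : mA p h (n + 1) = mA p h n - p * mG p h n h := by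
  rw [mA, mA, mG, moranPr_eq, moranPr_eq, moranPr_eq, sum_snoc, Finset.mul_sum,
    ← Finset.sum_sub_distrib]
  apply Finset.sum_congr rfl
  intro ω _
  rw [mW_snoc, mW_snoc, moranH_pad_snoc, moranH_pad_snoc,
    moranY_pad_snoc_top, moranY_pad_snoc_top]
  simp only [if_true, if_false, Bool.false_eq_true, ite_true, ite_false]
  set H := moranH (mPad n ω) n with hH
  set Y := moranY (mPad n ω) n with hYdef
  have hYH : Y ≤ H := moranY_le_moranH (mPad n ω) n
  have e0 : max H 0 = H := Nat.max_zero H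
  rw [e0]
  have e1 : (max H (Y + 1) ≤ h) = (H ≤ h ∧ Y + 1 ≤ h) := by
    simp [max_le_iff]
  rw [e1]
  by_cases hHh : H ≤ h
  · by_cases hYh : Y = h
    · have : ¬ (Y + 1 ≤ h) := by omega
      simp only [mInd, if_pos hHh, if_pos (And.intro hHh hYh),
        if_neg (fun c : H ≤ h ∧ Y + 1 ≤ h => this c.2)]
      ring
    · have : Y + 1 ≤ h := by omega
      simp only [mInd, if_pos hHh, if_pos (And.intro hHh this),
        if_neg (fun c : H ≤ h ∧ Y = h => hYh c.2)]
      ring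
  · simp only [mInd, if_neg hHh, if_neg (fun c : H ≤ h ∧ Y + 1 ≤ h => hHh c.1),
      if_neg (fun c : H ≤ h ∧ Y = h => hHh c.1)]
    ring

lemma mG_succ_zero (p : ℝ) (h n : ℕ) : mG p h (n + 1) 0 = (1 - p) * mA p h n := by
  rw [mA, mG, moranPr_eq, moranPr_eq, sum_snoc, Finset.mul_sum]
  apply Finset.sum_congr rfl
  intro ω _
  rw [mW_snoc, mW_snoc, moranH_pad_snoc, moranH_pad_snoc,
    moranY_pad_snoc_top, moranY_pad_snoc_top]
  simp only [if_true, if_false, Bool.false_eq_true, ite_true, ite_false]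
  set H := moranH (mPad n ω) n with hH
  set Y := moranY (mPad n ω) n with hYdef
  have e0 : max H 0 = H := Nat.max_zero H
  rw [e0]
  have e2 : mInd (max H (Y + 1) ≤ h ∧ Y + 1 = 0) = 0 := by
    simp [mInd]
  rw [e2]
  simp only [mInd, eq_self_iff_true, and_true]
  ring

lemma mG_succ (p : ℝ) (h n y : ℕ) (hy : y + 1 ≤ h) :
    mG p h (n + 1) (y + 1) = p * mG p h n y := by
  rw [mG, mG, moranPr_eq, moranPr_eq, sum_snoc, Finset.mul_sum]
  apply Finset.sum_congr rfl
  intro ω _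
  rw [mW_snoc, mW_snoc, moranH_pad_snoc, moranH_pad_snoc,
    moranY_pad_snoc_top, moranY_pad_snoc_top]
  simp only [if_true, if_false, Bool.false_eq_true, ite_true, ite_false]
  set H := moranH (mPad n ω) n with hH
  set Y := moranY (mPad n ω) n with hYdef
  have e0 : max H 0 = H := Nat.max_zero H
  rw [e0]
  have e2 : mInd (H ≤ h ∧ (0:ℕ) = y + 1) = 0 := by
    simp [mInd]
  rw [e2]
  have e1 : (max H (Y + 1) ≤ h ∧ Y + 1 = y + 1) = (H ≤ h ∧ Y = y) := by
    rw [eq_iff_iff]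
    constructor
    · rintro ⟨h1, h2⟩
      exact ⟨le_trans (le_max_left _ _) h1, by omega⟩
    · rintro ⟨h1, h2⟩
      subst h2
      exact ⟨max_le h1 hy, rfl⟩
  rw [e1]
  ring

lemma chooseInt_neg {m : ℤ} (hm : m < 0) (k : ℕ) : chooseInt m k = 0 := if_pos hm

lemma chooseInt_zero {m : ℤ} (hm : 0 ≤ m) : chooseInt m 0 = 1 := by
  rw [chooseInt, if_neg (not_lt.mpr hm)]
  simp

lemma chooseInt_nat (t : ℕ) (k : ℕ) : chooseInt (t : ℤ) k = (t.choose k : ℝ) := by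
  rw [chooseInt, if_neg (not_lt.mpr (Int.natCast_nonneg t))]
  simp

lemma chooseInt_key (A : ℤ) (k : ℕ) :
    chooseInt (A + 1) (k + 1) = chooseInt A (k + 1) + chooseInt A k := by
  rcases lt_or_ge A 0 with hA | hA
  · have hL : chooseInt (A + 1) (k + 1) = 0 := by
      rcases lt_or_ge (A + 1) 0 with h1 | h1
      · exact chooseInt_neg h1 _
      · have hA1 : A + 1 = 0 := by omega
        rw [hA1, chooseInt, if_neg (by norm_num)]
        simp
    rw [hL, chooseInt_neg hA, chooseInt_neg hA]
    ring
  · obtain ⟨t, rfl⟩ : ∃ t : ℕ, A = (t : ℤ) := ⟨A.toNat, (Int.toNat_of_nonneg hA).symm⟩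
    have h1 : ((t : ℤ) + 1) = ((t + 1 : ℕ) : ℤ) := by push_cast; ring
    rw [h1, chooseInt_nat, chooseInt_nat, chooseInt_nat, Nat.choose_succ_succ]
    push_cast
    ring

noncomputable def mTerm (p : ℝ) (h : ℕ) (n : ℤ) (k : ℕ) : ℝ :=
  (-((1 - p) * p ^ (h + 1))) ^ k
    * (chooseInt (n - k * (h + 1)) k - p ^ (h + 1) * chooseInt (n - (k + 1) * (h + 1)) k)

noncomputable def mS (p : ℝ) (h n : ℕ) : ℝ :=
  ∑ k ∈ Finset.range (n / (h + 1) + 1), mTerm p h (n : ℤ) k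

lemma mTerm_vanish (p : ℝ) (h : ℕ) {n : ℤ} {k : ℕ} (hk : n < k * (h + 1)) :
    mTerm p h n k = 0 := by
  have h1 : n - k * (h + 1) < 0 := by omega
  have h2 : n - (k + 1) * (h + 1) < 0 := by push_cast at *; nlinarith [ (0:ℤ) ≤ (h:ℤ)]
  rw [mTerm, chooseInt_neg h1, chooseInt_neg h2]
  ring

lemma mS_eq_T (p : ℝ) (h n N : ℕ) (hN : n / (h + 1) + 1 ≤ N) :
    mS p h n = ∑ k ∈ Finset.range N, mTerm p h (n : ℤ) k := by
  rw [mS]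
  apply Finset.sum_subset (Finset.range_subset_range.mpr hN)
  intro k _ hk
  apply mTerm_vanish
  have hk' : n / (h + 1) < k := by
    simp only [Finset.mem_range] at hk
    omega
  have := (Nat.div_lt_iff_lt_mul (Nat.succ_pos h)).mp hk'
  exact_mod_cast this

lemma mTerm_step (p : ℝ) (h : ℕ) (A : ℤ) (k : ℕ) :
    mTerm p h (A + 1) (k + 1) - mTerm p h A (k + 1)
      = (-((1 - p) * p ^ (h + 1))) * mTerm p h (A - ((h : ℤ) + 1)) k := by
  unfold mTerm
  rw [show A + 1 - (↑(k+1) : ℤ) * (↑h + 1) = (A - (↑(k+1) : ℤ) * (↑h + 1)) + 1 by ring]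
  rw [show A + 1 - ((↑(k+1) : ℤ) + 1) * (↑h + 1) = (A - ((↑(k+1) : ℤ) + 1) * (↑h + 1)) + 1 by ring]
  rw [chooseInt_key, chooseInt_key]
  rw [show A - ((h : ℤ) + 1) - (k : ℤ) * (↑h + 1) = A - (↑(k+1) : ℤ) * (↑h + 1) by push_cast; ring]
  rw [show A - ((h : ℤ) + 1) - ((k : ℤ) + 1) * (↑h + 1) = A - ((↑(k+1) : ℤ) + 1) * (↑h + 1) by push_cast; ring]
  ring

lemma mS_rec (p : ℝ) (h n : ℕ) (hn : h + 1 ≤ n) :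
    mS p h (n + 1) = mS p h n - (1 - p) * p ^ (h + 1) * mS p h (n - (h + 1)) := by
  have hN1 : (n + 1) / (h + 1) + 1 ≤ n + 2 := by
    have := Nat.div_le_self (n + 1) (h + 1); omega
  have hN2 : n / (h + 1) + 1 ≤ n + 2 := by
    have := Nat.div_le_self n (h + 1); omega
  have hN3 : (n - (h + 1)) / (h + 1) + 1 ≤ n + 1 := by
    have := Nat.div_le_self (n - (h + 1)) (h + 1); omega
  rw [mS_eq_T p h (n + 1) (n + 2) hN1, mS_eq_T p h n (n + 2) hN2,
    mS_eq_T p h (n - (h + 1)) (n + 1) hN3]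
  have main : (∑ k ∈ Finset.range (n + 2), mTerm p h ((n : ℤ) + 1) k)
      - (∑ k ∈ Finset.range (n + 2), mTerm p h (n : ℤ) k)
      = (-((1 - p) * p ^ (h + 1))) * ∑ k ∈ Finset.range (n + 1), mTerm p h (↑(n - (h + 1))) k := by
    rw [← Finset.sum_sub_distrib, Finset.sum_range_succ']
    have h0 : mTerm p h ((n : ℤ) + 1) 0 - mTerm p h (n : ℤ) 0 = 0 := by
      unfold mTerm
      rw [chooseInt_zero (by push_cast; omega), chooseInt_zero (by push_cast; omega),
        chooseInt_zero (by push_cast; omega), chooseInt_zero (by push_cast; omega)]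
      ring
    rw [h0, add_zero, Finset.mul_sum]
    apply Finset.sum_congr rfl
    intro k _
    rw [mTerm_step]
    rw [show ((↑(n - (h + 1)) : ℤ)) = (n : ℤ) - ((h : ℤ) + 1) by omega]
  have hcast : ((n : ℤ) + 1) = ((n + 1 : ℕ) : ℤ) := by push_cast; ring
  rw [hcast] at main
  have main2 : (∑ k ∈ Finset.range (n + 2), mTerm p h ((n + 1 : ℕ) : ℤ) k)
      = (∑ k ∈ Finset.range (n + 2), mTerm p h (n : ℤ) k)
        + (-((1 - p) * p ^ (h + 1))) * ∑ k ∈ Finset.range (n + 1), mTerm p h (↑(n - (h + 1))) k := by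
    linarith [main]
  rw [main2]
  ring

lemma mS_flat (p : ℝ) {h n : ℕ} (hn : n ≤ h) : mS p h n = 1 := by
  rw [mS, Nat.div_eq_of_lt (by omega), Finset.sum_range_one, mTerm]
  rw [chooseInt_zero (by push_cast; omega), chooseInt_neg (by push_cast; omega)]
  ring

lemma mS_h1 (p : ℝ) (h : ℕ) : mS p h (h + 1) = 1 - p ^ (h + 1) := by
  rw [mS, Nat.div_self (Nat.succ_pos h), Finset.sum_range_succ, Finset.sum_range_one,
    mTerm, mTerm]
  rw [chooseInt_zero (by push_cast; omega)]
  rw [chooseInt_zero (by push_cast; omega)]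
  rw [show ((h + 1 : ℕ) : ℤ) - ((1 : ℕ) : ℤ) * ((h : ℤ) + 1) = ((0 : ℕ) : ℤ) by push_cast; ring]
  rw [chooseInt_nat]
  rw [chooseInt_neg (by push_cast; omega)]
  simp [Nat.choose]


lemma mA_flat (p : ℝ) {h n : ℕ} (hn : n ≤ h) : mA p h n = 1 := by
  induction n with
  | zero => exact mA_zero p h
  | succ m ih =>
    rw [mA_succ, mG_vanish p h (by omega : m < h), ih (by omega)]
    ring

lemma mG_top (p : ℝ) (h : ℕ) : ∀ k, k ≤ h → ∀ m, mG p h (m + k) k = p ^ k * mG p h m 0 := by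
  intro k
  induction k with
  | zero => intro _ m; simp
  | succ k ih =>
    intro hk m
    rw [show m + (k + 1) = (m + k) + 1 by ring, mG_succ p h (m + k) k hk,
      ih (by omega) m, pow_succ]
    ring

lemma mA_h1 (p : ℝ) (h : ℕ) : mA p h (h + 1) = 1 - p ^ (h + 1) := by
  rw [mA_succ, mA_flat p le_rfl]
  have := mG_top p h h le_rfl 0
  rw [zero_add] at this
  rw [this, mG_zero_zero, pow_succ]
  ring

lemma mA_rec (p : ℝ) {h m : ℕ} (hm : h + 1 ≤ m) :
    mA p h (m + 1) = mA p h m - (1 - p) * p ^ (h + 1) * mA p h (m - (h + 1)) := by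
  obtain ⟨t, rfl⟩ : ∃ t, m = (t + 1) + h := ⟨m - h - 1, by omega⟩
  have e1 : mG p h ((t + 1) + h) h = p ^ h * mG p h (t + 1) 0 := mG_top p h h le_rfl (t + 1)
  rw [mA_succ, e1, mG_succ_zero]
  have e2 : (t + 1) + h - (h + 1) = t := by omega
  rw [e2, pow_succ]
  ring

lemma mA_eq_mS (p : ℝ) (h : ℕ) : ∀ n, mA p h n = mS p h n := by
  intro n
  induction n using Nat.strong_induction_on with
  | _ n ih =>
    rcases le_or_gt n h with hn | hn
    · rw [mA_flat p hn, mS_flat p hn]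
    · obtain ⟨m, rfl⟩ : ∃ m, n = m + 1 := ⟨n - 1, by omega⟩
      rcases eq_or_lt_of_le (Nat.lt_succ_iff.mp hn) with he | he
      · subst he
        rw [mA_h1, mS_h1]
      · have hm : h + 1 ≤ m := he
        rw [mA_rec p hm, mS_rec p h m hm, ih m (by omega), ih (m - (h + 1)) (by omega)]

/-- For the Moran walk, for every `n, h ∈ ℕ`:
`Pr(H_n ≤ h) = Σ_{k=0}^{⌊n/(h+1)⌋} (-q p^{h+1})^k (C(n-k(h+1),k) - p^{h+1} C(n-(k+1)(h+1),k))`. -/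
theorem moranWalk_height_binomial_formula
    (p : ℝ) (hp0 : 0 < p) (hp1 : p < 1) (q : ℝ) (hq : q = 1 - p)
    (n h : ℕ) :
    moranPr p n (fun ω => moranH ω n ≤ h)
      = ∑ k ∈ Finset.range (n / (h + 1) + 1),
          (-(q * p ^ (h + 1))) ^ k
            * (chooseInt ((n : ℤ) - k * (h + 1)) k
                - p ^ (h + 1) * chooseInt ((n : ℤ) - (k + 1) * (h + 1)) k) := by
  subst hq
  have := mA_eq_mS p h n
  rw [mA] at this
  rw [this, mS]
  apply Finset.sum_congr rfl
  intro k _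
  rw [mTerm]
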